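/- arXiv:2303.05059 — 7 statements merged into one kernel-verified Lean document; each statement's English description precedes it below -/
import Mathlib

section
/- Let e1, e2, e3 be nonzero integers with e1 + e2 + e3 = 0, and let (a,b,c) be integers with e1·a² + e2·b² + e3·c² = 0 and a ≡ b ≡ c ≡ 1 (mod 4). Then (1/8)(a+b)(b+c)(c+a) is an integer congruent to 1 modulo 4. -/
theorem stmt1 (e1 e2 e3 a b c : ℤ)
    (he1 : e1 ≠ 0) (he2 : e2 ≠ 0) (he3 : e3 ≠ 0)
    (hs : e1 + e2 + e3 = 0)
    (hq : e1 * a ^ 2 + e2 * b ^ 2 + e3 * c ^ 2 = 0)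
    (ha : a % 4 = 1) (hb : b % 4 = 1) (hc : c % 4 = 1) :
    ∃ k : ℤ, (a + b) * (b + c) * (c + a) = 8 * k ∧ k % 4 = 1 := by
  obtain ⟨x, hx⟩ : ∃ x, a = 4 * x + 1 := ⟨a / 4, by omega⟩
  obtain ⟨y, hy⟩ : ∃ y, b = 4 * y + 1 := ⟨b / 4, by omega⟩
  obtain ⟨z, hz⟩ : ∃ z, c = 4 * z + 1 := ⟨c / 4, by omega⟩
  refine ⟨4 * (2 * (x + y) * (y + z) * (z + x) + (x + y) * (y + z)
      + (y + z) * (z + x) + (z + x) * (x + y) + (x + y + z)) + 1, ?_, by omega⟩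
  subst hx hy hz
  ring
end

section
/- Let m ≡ 1 (mod 8) be a square-free integer, all of whose prime factors are congruent to ±1 modulo 8, and write m = u² − 2w² with integers u, w. Then m ≡ 1 (mod 16) if and only if the Jacobi symbol ((2+√2 mod m) / |m|) = 1, where 2+√2 is interpreted via a square root of 2 modulo |m|. -/
open ZMod

lemma per_prime (m u w s : ℤ) (hsf : Squarefree m) (hmodd : m % 2 = 1)
    (hrep : m = u ^ 2 - 2 * w ^ 2) (hs : ((s : ZMod m.natAbs)) ^ 2 = 2)
    (p : ℕ) (hp : p.Prime) (hpn : p ∣ m.natAbs) :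
    @legendreSym p ⟨hp⟩ (2 + s) = @legendreSym p ⟨hp⟩ (2 * u * (u + w)) := by
  haveI : Fact p.Prime := ⟨hp⟩
  have hpm : (p : ℤ) ∣ m :=
    dvd_trans (Int.natCast_dvd_natCast.mpr hpn) (Int.natAbs_dvd.mpr dvd_rfl)
  have hp2 : p ≠ 2 := by
    rintro rfl
    obtain ⟨k, hk⟩ := hpm
    omega
  have hPp : Prime (p : ℤ) := Nat.prime_iff_prime_int.mp hp
  have hple := hp.two_le
  -- p does not divide w
  have hnw : ¬ (p : ℤ) ∣ w := by
    intro hw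
    have h1 : (p : ℤ) ∣ u ^ 2 := by
      have he : u ^ 2 = m + 2 * w ^ 2 := by rw [hrep]; ring
      rw [he]
      exact dvd_add hpm (Dvd.dvd.mul_left (dvd_pow hw (by norm_num)) 2)
    have h2 : (p : ℤ) ∣ u := hPp.dvd_of_dvd_pow h1
    obtain ⟨a, ha⟩ := h2
    obtain ⟨b, hb⟩ := hw
    have h3 : (p : ℤ) * (p : ℤ) ∣ m := ⟨a ^ 2 - 2 * b ^ 2, by rw [hrep, ha, hb]; ring⟩
    have := hsf _ h3
    rw [Int.isUnit_iff] at this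
    omega
  have hnu : ¬ (p : ℤ) ∣ u := by
    intro hu
    have h1 : (p : ℤ) ∣ 2 * w ^ 2 := by
      have he : 2 * w ^ 2 = u ^ 2 - m := by rw [hrep]; ring
      rw [he]
      exact dvd_sub (dvd_pow hu (by norm_num)) hpm
    rcases hPp.dvd_mul.mp h1 with h | h
    · have := Int.le_of_dvd (by norm_num) h; omega
    · exact hnw (hPp.dvd_of_dvd_pow h)
  have hnuw : ¬ (p : ℤ) ∣ (u + w) := by
    intro h
    have h1 : (p : ℤ) ∣ w ^ 2 := by
      have he : w ^ 2 = (u + w) * (u - w) - m := by rw [hrep]; ring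
      rw [he]
      exact dvd_sub (h.mul_right _) hpm
    exact hnw (hPp.dvd_of_dvd_pow h1)
  have hnumw : ¬ (p : ℤ) ∣ (u - w) := by
    intro h
    have h1 : (p : ℤ) ∣ w ^ 2 := by
      have he : w ^ 2 = (u + w) * (u - w) - m := by rw [hrep]; ring
      rw [he]
      exact dvd_sub (h.mul_left _) hpm
    exact hnw (hPp.dvd_of_dvd_pow h1)
  -- casts to ZMod p
  have hu0 : ((u : ℤ) : ZMod p) ≠ 0 := fun h => hnu ((ZMod.intCast_zmod_eq_zero_iff_dvd u p).mp h)
  have hw0 : ((w : ℤ) : ZMod p) ≠ 0 := fun h => hnw ((ZMod.intCast_zmod_eq_zero_iff_dvd w p).mp h)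
  have hupw0 : (((u + w) : ℤ) : ZMod p) ≠ 0 :=
    fun h => hnuw ((ZMod.intCast_zmod_eq_zero_iff_dvd _ p).mp h)
  have humw0 : (((u - w) : ℤ) : ZMod p) ≠ 0 :=
    fun h => hnumw ((ZMod.intCast_zmod_eq_zero_iff_dvd _ p).mp h)
  have hcast : ((s : ZMod p)) ^ 2 = 2 := by
    have h1 : ((s ^ 2 - 2 : ℤ) : ZMod m.natAbs) = 0 := by push_cast; rw [hs]; ring
    have h2 : (m.natAbs : ℤ) ∣ s ^ 2 - 2 := (ZMod.intCast_zmod_eq_zero_iff_dvd _ _).mp h1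
    have h3 : (p : ℤ) ∣ s ^ 2 - 2 := dvd_trans (Int.natCast_dvd_natCast.mpr hpn) h2
    have h4 : ((s ^ 2 - 2 : ℤ) : ZMod p) = 0 := (ZMod.intCast_zmod_eq_zero_iff_dvd _ _).mpr h3
    push_cast at h4
    linear_combination h4
  have hu2p : ((u : ZMod p)) ^ 2 = 2 * ((w : ZMod p)) ^ 2 := by
    have h0 : ((m : ℤ) : ZMod p) = 0 := (ZMod.intCast_zmod_eq_zero_iff_dvd m p).mpr hpm
    rw [hrep] at h0
    push_cast at h0
    linear_combination h0
  have key : (u : ZMod p) * (s : ZMod p) = 2 * (w : ZMod p) ∨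
      (u : ZMod p) * (s : ZMod p) = -(2 * (w : ZMod p)) := by
    have hfac : ((u : ZMod p) * s - 2 * w) * ((u : ZMod p) * s + 2 * w) = 0 := by
      have : ((u : ZMod p) * s) ^ 2 = (2 * (w : ZMod p)) ^ 2 := by
        rw [mul_pow, hcast, mul_pow, hu2p]; ring
      linear_combination this
    rcases mul_eq_zero.mp hfac with h | h
    · left; linear_combination h
    · right; linear_combination h
  have congrL : ∀ a b : ℤ, ((a : ZMod p) = (b : ZMod p)) → legendreSym p a = legendreSym p b := by
    intro a b h
    simp only [legendreSym, h]
  have hLu : legendreSym p (u ^ 2) = 1 := legendreSym.sq_one' (p := p) hu0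
  have step1 : legendreSym p (2 + s) = legendreSym p (u ^ 2 * (2 + s)) := by
    rw [legendreSym.mul, hLu, one_mul]
  rcases key with hk | hk
  · have hc : ((u ^ 2 * (2 + s) : ℤ) : ZMod p) = ((2 * u * (u + w) : ℤ) : ZMod p) := by
      push_cast
      linear_combination (u : ZMod p) * hk
    rw [step1, congrL _ _ hc]
  · have hc : ((u ^ 2 * (2 + s) : ℤ) : ZMod p) = ((2 * u * (u - w) : ℤ) : ZMod p) := by
      push_cast
      linear_combination (u : ZMod p) * hk
    have hpm1 : legendreSym p (u - w) * legendreSym p (u + w) = 1 := by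
      rw [← legendreSym.mul]
      have hc2 : (((u - w) * (u + w) : ℤ) : ZMod p) = ((w ^ 2 : ℤ) : ZMod p) := by
        push_cast
        linear_combination hu2p
      rw [congrL _ _ hc2]
      exact legendreSym.sq_one' (p := p) hw0
    have h1 := legendreSym.eq_one_or_neg_one (p := p) (a := u - w) humw0
    have h2 := legendreSym.eq_one_or_neg_one (p := p) (a := u + w) hupw0
    have heq : legendreSym p (u - w) = legendreSym p (u + w) := by
      rcases h1 with h | h <;> rcases h2 with h' | h' <;> rw [h, h'] at hpm1 ⊢ <;> omega
    rw [step1, congrL _ _ hc, legendreSym.mul, legendreSym.mul (p := p) (2 * u), heq]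


lemma jacobi_primewise {a b : ℤ} {n : ℕ}
    (h : ∀ p : ℕ, (hp : p.Prime) → p ∣ n → @legendreSym p ⟨hp⟩ a = @legendreSym p ⟨hp⟩ b) :
    jacobiSym a n = jacobiSym b n := by
  unfold jacobiSym
  congr 1
  apply List.pmap_congr_left
  intro p hp h1 h2
  exact h p h1 (Nat.dvd_of_mem_primeFactorsList hp)

theorem stmt2 (m u w s : ℤ)
    (hm8 : m % 8 = 1) (hsf : Squarefree m)
    (hpf : ∀ p : ℕ, p.Prime → (p : ℤ) ∣ m → p % 8 = 1 ∨ p % 8 = 7)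
    (hrep : m = u ^ 2 - 2 * w ^ 2)
    (hs : ((s : ZMod m.natAbs)) ^ 2 = 2) :
    m % 16 = 1 ↔ jacobiSym (2 + s) m.natAbs = 1 := by
  have hmodd : m % 2 = 1 := by omega
  by_cases hn1 : m.natAbs = 1
  · have hm1 : m = 1 := by omega
    subst hm1
    norm_num
  -- main case
  have hngt : 1 < m.natAbs := by omega
  set U : ℕ := u.natAbs with hUdef
  set W : ℕ := w.natAbs with hWdef
  set B : ℕ := U + W with hBdef
  have hU2 : ((U : ℤ)) ^ 2 = u ^ 2 := by
    rw [show ((U : ℤ)) = |u| from (Int.abs_eq_natAbs u).symm, sq_abs]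
  have hW2 : ((W : ℤ)) ^ 2 = w ^ 2 := by
    rw [show ((W : ℤ)) = |w| from (Int.abs_eq_natAbs w).symm, sq_abs]
  have hrep' : m = (U : ℤ) ^ 2 - 2 * (W : ℤ) ^ 2 := by rw [hU2, hW2]; exact hrep
  -- parity helper
  have hoddsq : ∀ x : ℤ, x % 2 = 1 → ∃ k, x ^ 2 = 8 * k + 1 := by
    intro x hx
    obtain ⟨a, ha⟩ : ∃ a, x = 2 * a + 1 := ⟨x / 2, by omega⟩
    obtain ⟨b, hb⟩ := Int.even_mul_succ_self a
    have h2 : x ^ 2 = 4 * (a * (a + 1)) + 1 := by rw [ha]; ring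
    exact ⟨b, by rw [h2, hb]; ring⟩
  have hu_odd : u % 2 = 1 := by
    by_contra h
    obtain ⟨k, hk⟩ : ∃ k, u = 2 * k := ⟨u / 2, by omega⟩
    obtain ⟨c, hc⟩ : ∃ c, m = 2 * c := ⟨2 * k ^ 2 - w ^ 2, by rw [hrep, hk]; ring⟩
    omega
  obtain ⟨k, hk⟩ := hoddsq u hu_odd
  have hc : 2 * w ^ 2 = 8 * k + 1 - m := by rw [hrep, hk]; ring
  have hw_even : w % 2 = 0 := by
    by_contra h
    have hw1 : w % 2 = 1 := by omega
    obtain ⟨k2, hk2⟩ := hoddsq w hw1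
    rw [hk2] at hc
    omega
  have hUodd : U % 2 = 1 := by omega
  have hWeven : W % 2 = 0 := by omega
  have hBodd : B % 2 = 1 := by omega
  have hUoddO : Odd U := Nat.odd_iff.mpr hUodd
  have hBoddO : Odd B := Nat.odd_iff.mpr hBodd
  have hnodd : Odd m.natAbs := by rw [Nat.odd_iff]; omega
  have hn8 : m.natAbs % 8 = 1 ∨ m.natAbs % 8 = 7 := by omega
  -- coprimality from squarefreeness
  have hsq_unit : ∀ q : ℕ, q.Prime → ((q : ℤ) ∣ (U : ℤ)) → ((q : ℤ) ∣ (W : ℤ)) → False := by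
    intro q hq hq1 hq2
    obtain ⟨a, ha⟩ := hq1
    obtain ⟨b, hb⟩ := hq2
    have h3 : (q : ℤ) * (q : ℤ) ∣ m := ⟨a ^ 2 - 2 * b ^ 2, by rw [hrep', ha, hb]; ring⟩
    have h4 := hsf _ h3
    rw [Int.isUnit_iff] at h4
    have := hq.two_le
    omega
  have hcopWU : Int.gcd ((W : ℤ)) ((U : ℕ) : ℤ) = 1 := by
    simp only [Int.gcd_natCast_natCast]
    by_contra h
    obtain ⟨q, hq, hdvd⟩ := Nat.exists_prime_and_dvd h
    exact hsq_unit q hq (Int.natCast_dvd_natCast.mpr (hdvd.trans (Nat.gcd_dvd_right _ _)))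
      (Int.natCast_dvd_natCast.mpr (hdvd.trans (Nat.gcd_dvd_left _ _)))
  have hcopWB : Int.gcd ((W : ℤ)) ((B : ℕ) : ℤ) = 1 := by
    simp only [Int.gcd_natCast_natCast]
    by_contra h
    obtain ⟨q, hq, hdvd⟩ := Nat.exists_prime_and_dvd h
    have hqW : q ∣ W := hdvd.trans (Nat.gcd_dvd_left _ _)
    have hqB : q ∣ B := hdvd.trans (Nat.gcd_dvd_right _ _)
    have hqU : q ∣ U := by
      have h5 : q ∣ B - W := Nat.dvd_sub hqB hqW
      simpa [hBdef] using h5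
    exact hsq_unit q hq (Int.natCast_dvd_natCast.mpr hqU) (Int.natCast_dvd_natCast.mpr hqW)
  -- the two inner Jacobi computations
  have hJmU : jacobiSym m U = χ₈' U := by
    have hdd : ((U : ℕ) : ℤ) ∣ (-2 * (W : ℤ) ^ 2) - m := ⟨-(U : ℤ), by rw [hrep']; ring⟩
    have h1 : jacobiSym m U = jacobiSym (-2 * (W : ℤ) ^ 2) U :=
      jacobiSym.mod_left' (Int.modEq_iff_dvd.mpr hdd)
    rw [h1, jacobiSym.mul_left, jacobiSym.sq_one' hcopWU, mul_one,
      jacobiSym.at_neg_two hUoddO]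
  have hJmB : jacobiSym m B = χ₄ B := by
    have hdd : ((B : ℕ) : ℤ) ∣ (-1 * (W : ℤ) ^ 2) - m :=
      ⟨(W : ℤ) - (U : ℤ), by rw [hrep']; push_cast [hBdef]; ring⟩
    have h1 : jacobiSym m B = jacobiSym (-1 * (W : ℤ) ^ 2) B :=
      jacobiSym.mod_left' (Int.modEq_iff_dvd.mpr hdd)
    rw [h1, jacobiSym.mul_left, jacobiSym.sq_one' hcopWB, mul_one,
      jacobiSym.at_neg_one hBoddO]
  -- reduction to J(U|n) * J(B|n)
  have hA : jacobiSym (2 + s) m.natAbs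
      = jacobiSym (2 * (U : ℤ) * ((U : ℤ) + (W : ℤ))) m.natAbs :=
    jacobi_primewise (fun p hp hpn => per_prime m (U : ℤ) (W : ℤ) s hsf hmodd hrep' hs p hp hpn)
  have hBcast : ((U : ℤ) + (W : ℤ)) = ((B : ℕ) : ℤ) := by push_cast [hBdef]; ring
  have hsplit : jacobiSym (2 + s) m.natAbs
      = jacobiSym 2 m.natAbs * jacobiSym ((U : ℕ) : ℤ) m.natAbs
        * jacobiSym ((B : ℕ) : ℤ) m.natAbs := by
    rw [hA, hBcast, jacobiSym.mul_left, jacobiSym.mul_left]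
  have hJ2 : jacobiSym 2 m.natAbs = 1 := by
    rw [jacobiSym.at_two hnodd, ZMod.χ₈_nat_eq_if_mod_eight]
    have h2 : ¬ (m.natAbs % 2 = 0) := by omega
    rw [if_neg h2, if_pos hn8]
  -- evaluate J(U|n) and J(B|n)
  have hm0 : m ≠ 0 := by omega
  have hJU : jacobiSym ((U : ℕ) : ℤ) m.natAbs = χ₈' U := by
    rcases lt_or_gt_of_ne hm0 with hneg | hpos
    · have hcast : ((m.natAbs : ℕ) : ℤ) = -m := by omega
      have hn4 : m.natAbs % 4 = 3 := by omega
      have hU4 : U % 4 = 1 ∨ U % 4 = 3 := by omega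
      rcases hU4 with hU4 | hU4
      · rw [jacobiSym.quadratic_reciprocity_one_mod_four hU4 hnodd, hcast,
          jacobiSym.neg m hUoddO, hJmU, ZMod.χ₄_nat_one_mod_four hU4, one_mul]
      · rw [jacobiSym.quadratic_reciprocity_three_mod_four hU4 hn4, hcast,
          jacobiSym.neg m hUoddO, hJmU, ZMod.χ₄_nat_three_mod_four hU4]
        ring
    · have hcast : ((m.natAbs : ℕ) : ℤ) = m := by omega
      have hn4 : m.natAbs % 4 = 1 := by omega
      rw [jacobiSym.quadratic_reciprocity_one_mod_four' hUoddO hn4, hcast, hJmU]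
  have hJB : jacobiSym ((B : ℕ) : ℤ) m.natAbs = χ₄ B := by
    rcases lt_or_gt_of_ne hm0 with hneg | hpos
    · have hcast : ((m.natAbs : ℕ) : ℤ) = -m := by omega
      have hn4 : m.natAbs % 4 = 3 := by omega
      have hB4 : B % 4 = 1 ∨ B % 4 = 3 := by omega
      rcases hB4 with hB4 | hB4
      · rw [jacobiSym.quadratic_reciprocity_one_mod_four hB4 hnodd, hcast,
          jacobiSym.neg m hBoddO, hJmB, ZMod.χ₄_nat_one_mod_four hB4]
        norm_num
      · rw [jacobiSym.quadratic_reciprocity_three_mod_four hB4 hn4, hcast,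
          jacobiSym.neg m hBoddO, hJmB, ZMod.χ₄_nat_three_mod_four hB4]
        norm_num
    · have hcast : ((m.natAbs : ℕ) : ℤ) = m := by omega
      have hn4 : m.natAbs % 4 = 1 := by omega
      rw [jacobiSym.quadratic_reciprocity_one_mod_four' hBoddO hn4, hcast, hJmB]
  have hfinal : jacobiSym (2 + s) m.natAbs = χ₈' U * χ₄ B := by
    rw [hsplit, hJ2, hJU, hJB, one_mul]
  -- final residue computation
  obtain ⟨r, hrdef⟩ : ∃ r, (U : ℤ) % 8 = r := ⟨_, rfl⟩
  obtain ⟨t, htdef⟩ : ∃ t, (W : ℤ) % 4 = t := ⟨_, rfl⟩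
  obtain ⟨q, hq⟩ : ∃ q, (U : ℤ) = 8 * q + r := ⟨(U : ℤ) / 8, by omega⟩
  obtain ⟨c, hc2⟩ : ∃ c, (W : ℤ) = 4 * c + t := ⟨(W : ℤ) / 4, by omega⟩
  obtain ⟨Q, hQ⟩ : ∃ Q, m = 16 * Q + (r ^ 2 - 2 * t ^ 2) :=
    ⟨4 * q ^ 2 + q * r - 2 * c ^ 2 - c * t, by rw [hrep', hq, hc2]; ring⟩
  rw [hfinal, ZMod.χ₈'_nat_eq_if_mod_eight, ZMod.χ₄_nat_eq_if_mod_four]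
  have hrcase : r = 1 ∨ r = 3 ∨ r = 5 ∨ r = 7 := by omega
  have htcase : t = 0 ∨ t = 2 := by omega
  rcases hrcase with rfl | rfl | rfl | rfl <;> rcases htcase with rfl | rfl <;>
    (norm_num at hQ; split_ifs <;> norm_num <;> omega)
end

section
/- Let e1, e2 be odd integers and e3 = −e1−e2 with 2 exactly dividing e3 (i.e., v₂(e3) = 1). Let n be an odd integer and d1, d2, d3 odd integers. If there exist 2-adic integers t, u1, u2, u3, not all divisible by 2, satisfying e1·n·t² + d2·u2² − d3·u3² = 0, e2·n·t² + d3·u3² − d1·u1² = 0, and e3·n·t² + d1·u1² − d2·u2² = 0, then it is impossible that d1 ≡ d2 ≡ −1 (mod 4) and d3 ≡ 1 (mod 4). -/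
set_option synthInstance.maxHeartbeats 1000000 in
set_option synthInstance.maxSize 2000 in
set_option maxRecDepth 4000 in
private lemma stmt4_key : ∀ E1 E2 N st s1 s2 s3 : ZMod 4,
    (N = 1 ∨ N = 3) →
    (st = 0 ∨ st = 1) → (s1 = 0 ∨ s1 = 1) → (s2 = 0 ∨ s2 = 1) → (s3 = 0 ∨ s3 = 1) →
    (st = 1 ∨ s1 = 1 ∨ s2 = 1 ∨ s3 = 1) →
    E1 * N * st + 3 * s2 - s3 = 0 →
    E2 * N * st + s3 - 3 * s1 = 0 →
    2 * N * st + 3 * s1 - 3 * s2 = 0 → False := by decide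

private lemma stmt4_sq_unit4 : ∀ a : ZMod 4, IsUnit a → a ^ 2 = 1 := by decide

private lemma stmt4_phi_sq_unit (x : ℤ_[2]) (h : ¬ (2 : ℤ_[2]) ∣ x) :
    (PadicInt.toZModPow 2 x : ZMod 4) ^ 2 = 1 := by
  have hu : IsUnit x := by
    rw [PadicInt.isUnit_iff]
    refine le_antisymm (PadicInt.norm_le_one x) ?_
    by_contra hlt
    push_neg at hlt
    exact h ((PadicInt.norm_lt_one_iff_dvd x).mp hlt)
  exact stmt4_sq_unit4 _ (hu.map (PadicInt.toZModPow 2))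

private lemma stmt4_phi_sq01 (x : ℤ_[2]) :
    (PadicInt.toZModPow 2 x : ZMod 4) ^ 2 = 0 ∨ (PadicInt.toZModPow 2 x : ZMod 4) ^ 2 = 1 := by
  by_cases h : (2 : ℤ_[2]) ∣ x
  · left
    obtain ⟨y, rfl⟩ := h
    rw [map_mul, mul_pow]
    have h2 : (PadicInt.toZModPow 2 (2 : ℤ_[2]) : ZMod 4) ^ 2 = 0 := by
      rw [map_ofNat]; decide
    rw [h2, zero_mul]
  · right; exact stmt4_phi_sq_unit x h

theorem stmt4 (e1 e2 e3 n d1 d2 d3 : ℤ)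
    (ho1 : Odd e1) (ho2 : Odd e2) (he3 : e3 = -e1 - e2)
    (hv2 : 2 ∣ e3 ∧ ¬ (4 ∣ e3))
    (hn : Odd n) (hd1 : Odd d1) (hd2 : Odd d2) (hd3 : Odd d3)
    (t u1 u2 u3 : ℤ_[2])
    (hprim : ¬ ((2 : ℤ_[2]) ∣ t ∧ (2 : ℤ_[2]) ∣ u1 ∧ (2 : ℤ_[2]) ∣ u2 ∧ (2 : ℤ_[2]) ∣ u3))
    (h1 : (e1 : ℤ_[2]) * n * t ^ 2 + d2 * u2 ^ 2 - d3 * u3 ^ 2 = 0)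
    (h2 : (e2 : ℤ_[2]) * n * t ^ 2 + d3 * u3 ^ 2 - d1 * u1 ^ 2 = 0)
    (h3 : (e3 : ℤ_[2]) * n * t ^ 2 + d1 * u1 ^ 2 - d2 * u2 ^ 2 = 0) :
    ¬ (d1 % 4 = 3 ∧ d2 % 4 = 3 ∧ d3 % 4 = 1) := by
  rintro ⟨hD1, hD2, hD3⟩
  set φ : ℤ_[2] →+* ZMod 4 := PadicInt.toZModPow 2 with hφ
  -- cast facts
  have cd1 : ((d1 : ℤ) : ZMod 4) = 3 := by
    have : ((d1 : ℤ) : ZMod 4) = ((3 : ℤ) : ZMod 4) :=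
      (ZMod.intCast_eq_intCast_iff _ _ _).mpr (by show d1 % 4 = 3 % 4; omega)
    simpa using this
  have cd2 : ((d2 : ℤ) : ZMod 4) = 3 := by
    have : ((d2 : ℤ) : ZMod 4) = ((3 : ℤ) : ZMod 4) :=
      (ZMod.intCast_eq_intCast_iff _ _ _).mpr (by show d2 % 4 = 3 % 4; omega)
    simpa using this
  have cd3 : ((d3 : ℤ) : ZMod 4) = 1 := by
    have : ((d3 : ℤ) : ZMod 4) = ((1 : ℤ) : ZMod 4) :=
      (ZMod.intCast_eq_intCast_iff _ _ _).mpr (by show d3 % 4 = 1 % 4; omega)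
    simpa using this
  have ce3 : ((e3 : ℤ) : ZMod 4) = 2 := by
    obtain ⟨k, hk⟩ := hv2.1
    have : ((e3 : ℤ) : ZMod 4) = ((2 : ℤ) : ZMod 4) :=
      (ZMod.intCast_eq_intCast_iff _ _ _).mpr (by show e3 % 4 = 2 % 4; omega)
    simpa using this
  have cn : ((n : ℤ) : ZMod 4) = 1 ∨ ((n : ℤ) : ZMod 4) = 3 := by
    obtain ⟨k, hk⟩ := hn
    rcases (by omega : n % 4 = 1 ∨ n % 4 = 3) with h | h
    · left
      have : ((n : ℤ) : ZMod 4) = ((1 : ℤ) : ZMod 4) :=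
        (ZMod.intCast_eq_intCast_iff _ _ _).mpr (by show n % 4 = 1 % 4; omega)
      simpa using this
    · right
      have : ((n : ℤ) : ZMod 4) = ((3 : ℤ) : ZMod 4) :=
        (ZMod.intCast_eq_intCast_iff _ _ _).mpr (by show n % 4 = 3 % 4; omega)
      simpa using this
  -- map the equations
  have H1 := congrArg φ h1
  have H2 := congrArg φ h2
  have H3 := congrArg φ h3
  simp only [map_add, map_sub, map_mul, map_pow, map_intCast, map_zero] at H1 H2 H3
  rw [cd2, cd3] at H1
  rw [cd3, cd1] at H2
  rw [ce3, cd1, cd2] at H3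
  rw [one_mul] at H1 H2
  -- squares are 0 or 1
  have st01 := stmt4_phi_sq01 t
  have s101 := stmt4_phi_sq01 u1
  have s201 := stmt4_phi_sq01 u2
  have s301 := stmt4_phi_sq01 u3
  -- primitivity
  have hp : (φ t) ^ 2 = 1 ∨ (φ u1) ^ 2 = 1 ∨ (φ u2) ^ 2 = 1 ∨ (φ u3) ^ 2 = 1 := by
    by_cases h : (2 : ℤ_[2]) ∣ t
    · by_cases h1' : (2 : ℤ_[2]) ∣ u1
      · by_cases h2' : (2 : ℤ_[2]) ∣ u2
        · by_cases h3' : (2 : ℤ_[2]) ∣ u3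
          · exact absurd ⟨h, h1', h2', h3'⟩ hprim
          · exact Or.inr (Or.inr (Or.inr (stmt4_phi_sq_unit u3 h3')))
        · exact Or.inr (Or.inr (Or.inl (stmt4_phi_sq_unit u2 h2')))
      · exact Or.inr (Or.inl (stmt4_phi_sq_unit u1 h1'))
    · exact Or.inl (stmt4_phi_sq_unit t h)
  exact stmt4_key ((e1 : ℤ) : ZMod 4) ((e2 : ℤ) : ZMod 4) ((n : ℤ) : ZMod 4)
    ((φ t) ^ 2) ((φ u1) ^ 2) ((φ u2) ^ 2) ((φ u3) ^ 2)
    cn st01 s101 s201 s301 hp H1 H2 H3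
end

section
/- Let e1, e2 be odd integers, e3 = −e1−e2 with v₂(e3) = 1, n odd, and d1, d2, d3 odd integers satisfying d1·d2·d3 ∈ (ℚ^×)², d1 ≡ 1 (mod 4), d2 ≡ d3 ≡ −1 (mod 4), and the Hilbert symbol conditions [e1·n·d3, d1]₂ = [e2·n·d1, d2]₂ = [e3·n·d2, d3]₂ = 0. Then (d1 − e2·n) − (d2 + e1·n) ≡ 0 (mod 8) and e2·n ≡ d1 (mod 4). -/
/-- The additive Hilbert symbol `[a, b]₂ ∈ 𝔽₂` over `ℚ₂` vanishes
(equivalently, the multiplicative Hilbert symbol `(a, b)₂ = 1`) iff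
`z² = a·x² + b·y²` has a nontrivial solution over `ℚ₂`. -/
def HilbertVanish2 (a b : ℤ) : Prop :=
  ∃ x y z : ℚ_[2], ¬ (x = 0 ∧ y = 0 ∧ z = 0) ∧
    (a : ℚ_[2]) * x ^ 2 + (b : ℚ_[2]) * y ^ 2 = z ^ 2

/-!
Scaling a nontrivial solution of `z² = a x² + b y²` over `ℚ₂` by the inverse of its largest
coordinate gives a solution over `ℤ₂` with a unit coordinate, and its reduction modulo `8` keeps
that unit. A finite check modulo `8` then shows that `[a, b]₂ = 0` is impossible when
`a ≡ b ≡ 3 (mod 4)` and forces `a + b ≡ 1 (mod 8)` when `a ≡ 2`, `b ≡ 3 (mod 4)`. The second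
symbol condition thus gives `e₂ n d₁ ≡ 1 (mod 4)`, the third `e₃ n d₂ + d₃ ≡ 1 (mod 8)`, and
with `d₁ d₂ d₃ ≡ 1 (mod 8)` the latter becomes `d₁ - d₂ + e₃ n ≡ 0 (mod 8)`.
-/

theorem exists_mul_norm_le_one_and_norm_eq_one {K ι : Type*} [NormedDivisionRing K] [Finite ι]
    {v : ι → K} (hv : v ≠ 0) : ∃ c : K, (∀ i, ‖c * v i‖ ≤ 1) ∧ ∃ i, ‖c * v i‖ = 1 := by
  obtain ⟨j, hj⟩ := Function.ne_iff.1 hv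
  have : Nonempty ι := ⟨j⟩
  obtain ⟨i, hi⟩ := Finite.exists_max fun i ↦ ‖v i‖
  have hvi : 0 < ‖v i‖ := (norm_pos_iff.2 hj).trans_le (hi j)
  refine ⟨(v i)⁻¹, fun k ↦ ?_, i, ?_⟩
  · rw [norm_mul, norm_inv, inv_mul_le_iff₀ hvi, mul_one]
    exact hi k
  · rw [inv_mul_cancel₀ (norm_pos_iff.1 hvi), norm_one]

namespace PadicInt

variable {p : ℕ} [Fact p.Prime]

theorem exists_isUnit_solution_of_padic (a b : ℤ_[p]) {x y z : ℚ_[p]}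
    (hxyz : ¬(x = 0 ∧ y = 0 ∧ z = 0)) (h : a * x ^ 2 + b * y ^ 2 = z ^ 2) :
    ∃ X Y Z : ℤ_[p], (IsUnit X ∨ IsUnit Y ∨ IsUnit Z) ∧ a * X ^ 2 + b * Y ^ 2 = Z ^ 2 := by
  have hv : ![x, y, z] ≠ 0 := fun hv ↦
    hxyz ⟨congrFun hv 0, congrFun hv 1, congrFun hv 2⟩
  obtain ⟨c, hle, i, hi⟩ := exists_mul_norm_le_one_and_norm_eq_one hv
  refine ⟨⟨c * x, hle 0⟩, ⟨c * y, hle 1⟩, ⟨c * z, hle 2⟩, ?_, ?_⟩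
  · fin_cases i
    exacts [.inl (isUnit_iff.2 hi), .inr (.inl (isUnit_iff.2 hi)), .inr (.inr (isUnit_iff.2 hi))]
  · apply Subtype.ext
    change (a : ℚ_[p]) * (c * x) ^ 2 + b * (c * y) ^ 2 = (c * z) ^ 2
    linear_combination c ^ 2 * h

end PadicInt

namespace ZMod

theorem val_emod_four_intCast_eight (a : ℤ) : ((a : ZMod 8).val : ℤ) % 4 = a % 4 := by
  have := ZMod.val_intCast (n := 8) a
  omega

theorem mul_sq_add_mul_sq_ne_sq_eight {A B X Y Z : ZMod 8} (hA : A.val % 4 = 3)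
    (hB : B.val % 4 = 3) (hunit : IsUnit X ∨ IsUnit Y ∨ IsUnit Z) :
    A * X ^ 2 + B * Y ^ 2 ≠ Z ^ 2 := by
  have key : ∀ A : ZMod 8, A.val % 4 = 3 → ∀ B : ZMod 8, B.val % 4 = 3 → ∀ X Y Z : ZMod 8,
      (IsUnit X ∨ IsUnit Y ∨ IsUnit Z) → A * X ^ 2 + B * Y ^ 2 ≠ Z ^ 2 := by
    decide
  exact key A hA B hB X Y Z hunit

theorem add_eq_one_of_mul_sq_add_mul_sq_eq_sq_eight {A B X Y Z : ZMod 8} (hA : A.val % 4 = 2)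
    (hB : B.val % 4 = 3) (hunit : IsUnit X ∨ IsUnit Y ∨ IsUnit Z)
    (h : A * X ^ 2 + B * Y ^ 2 = Z ^ 2) : A + B = 1 := by
  have key : ∀ A : ZMod 8, A.val % 4 = 2 → ∀ B : ZMod 8, B.val % 4 = 3 → ∀ X Y Z : ZMod 8,
      (IsUnit X ∨ IsUnit Y ∨ IsUnit Z) → A * X ^ 2 + B * Y ^ 2 = Z ^ 2 → A + B = 1 := by
    decide
  exact key A hA B hB X Y Z hunit h

end ZMod

namespace HilbertVanish2

variable {a b : ℤ}

theorem exists_zmod_eight (h : HilbertVanish2 a b) :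
    ∃ X Y Z : ZMod 8, (IsUnit X ∨ IsUnit Y ∨ IsUnit Z) ∧ a * X ^ 2 + b * Y ^ 2 = Z ^ 2 := by
  obtain ⟨x, y, z, hxyz, h⟩ := h
  obtain ⟨X, Y, Z, hunit, hXYZ⟩ :=
    PadicInt.exists_isUnit_solution_of_padic (a : ℤ_[2]) b hxyz (by push_cast; exact h)
  let π := PadicInt.toZModPow (p := 2) 3
  refine ⟨π X, π Y, π Z, ?_, by simpa [π] using congrArg π hXYZ⟩
  rcases hunit with hu | hu | hu
  exacts [.inl (hu.map π), .inr (.inl (hu.map π)), .inr (.inr (hu.map π))]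

theorem emod_four_eq_one (h : HilbertVanish2 a b) (ha : Odd a) (hb : b % 4 = 3) : a % 4 = 1 := by
  obtain ⟨X, Y, Z, hunit, hXYZ⟩ := h.exists_zmod_eight
  have ha2 := Int.odd_iff.1 ha
  by_contra ha4
  refine ZMod.mul_sq_add_mul_sq_ne_sq_eight ?_ ?_ hunit hXYZ
  · have := ZMod.val_emod_four_intCast_eight a
    omega
  · have := ZMod.val_emod_four_intCast_eight b
    omega

theorem add_emod_eight_eq_one (h : HilbertVanish2 a b) (ha : a % 4 = 2) (hb : b % 4 = 3) :
    (a + b) % 8 = 1 := by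
  obtain ⟨X, Y, Z, hunit, hXYZ⟩ := h.exists_zmod_eight
  have hsum := ZMod.add_eq_one_of_mul_sq_add_mul_sq_eq_sq_eight ?_ ?_ hunit hXYZ
  · have := ZMod.val_intCast (n := 8) (a + b)
    rw [Int.cast_add, hsum] at this
    exact this.symm
  · have := ZMod.val_emod_four_intCast_eight a
    omega
  · have := ZMod.val_emod_four_intCast_eight b
    omega

end HilbertVanish2

theorem Int.emod_eight_eq_one_of_odd_of_isSquare {N : ℤ} (hodd : Odd N) (hsq : IsSquare (N : ℚ)) :
    N % 8 = 1 := by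
  obtain ⟨k, rfl⟩ := Rat.isSquare_intCast_iff.1 hsq
  have := Int.eight_dvd_sq_sub_one_of_odd (Int.odd_mul.1 hodd).1
  rw [sq] at this
  omega

/-- Since odd squares are `1` modulo `8`, the hypotheses give `d₂ d₃ ≡ d₁` and `E ≡ d₂ - d₂ d₃`. -/
theorem Int.sub_add_emod_eight_eq_zero {d₁ d₂ d₃ E : ℤ} (h₁ : Odd d₁) (h₂ : Odd d₂)
    (hprod : d₁ * d₂ * d₃ % 8 = 1) (hE : (E * d₂ + d₃) % 8 = 1) : (d₁ - d₂ + E) % 8 = 0 := by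
  obtain ⟨u, hu⟩ : (8 : ℤ) ∣ E * d₂ + d₃ - 1 := by omega
  obtain ⟨v, hv⟩ : (8 : ℤ) ∣ d₁ * d₂ * d₃ - 1 := by omega
  obtain ⟨s, hs⟩ := Int.eight_dvd_sq_sub_one_of_odd h₁
  obtain ⟨t, ht⟩ := Int.eight_dvd_sq_sub_one_of_odd h₂
  have : d₁ - d₂ + E = 8 * (d₂ * u - E * t - d₁ * v + d₂ * d₃ * s) := by
    linear_combination d₂ * hu - E * ht - d₁ * hv + d₂ * d₃ * hs
  omega

theorem stmt8_general (e1 e2 e3 n d1 d2 d3 : ℤ)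
    (ho2 : Odd e2) (he3 : e3 = -e1 - e2)
    (hv2 : 2 ∣ e3 ∧ ¬ (4 ∣ e3)) (hn : Odd n)
    (hodd1 : Odd d1) (hodd2 : Odd d2) (hodd3 : Odd d3)
    (hsq : ∃ r : ℚ, r ≠ 0 ∧ ((d1 * d2 * d3 : ℤ) : ℚ) = r ^ 2)
    (hd1 : d1 % 4 = 1) (hd2 : d2 % 4 = 3) (hd3 : d3 % 4 = 3)
    (hH2 : HilbertVanish2 (e2 * n * d1) d2)
    (hH3 : HilbertVanish2 (e3 * n * d2) d3) :
    ((d1 - e2 * n) - (d2 + e1 * n)) % 8 = 0 ∧ (e2 * n) % 4 = d1 % 4 := by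
  obtain ⟨r, -, hr⟩ := hsq
  have h2 : e2 * n * d1 % 4 = 1 := hH2.emod_four_eq_one ((ho2.mul hn).mul hodd1) hd2
  have he3n : e3 * n * d2 % 4 = 2 := by
    have hnd : n * d2 % 2 = 1 := Int.odd_iff.1 (hn.mul hodd2)
    have he3' : e3 % 4 = 2 := by omega
    rw [mul_assoc, Int.mul_emod, he3']
    omega
  have h3 : (e3 * n * d2 + d3) % 8 = 1 := hH3.add_emod_eight_eq_one he3n hd3
  have hprod : d1 * d2 * d3 % 8 = 1 :=
    Int.emod_eight_eq_one_of_odd_of_isSquare ((hodd1.mul hodd2).mul hodd3) ⟨r, by rw [hr, sq]⟩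
  constructor
  · have hlin : (d1 - e2 * n) - (d2 + e1 * n) = d1 - d2 + e3 * n := by rw [he3]; ring
    rw [hlin]
    exact Int.sub_add_emod_eight_eq_zero hodd1 hodd2 hprod h3
  · have := Int.mul_emod (e2 * n) d1 4
    rw [hd1] at this
    omega

theorem stmt8 (e1 e2 e3 n d1 d2 d3 : ℤ)
    (ho1 : Odd e1) (ho2 : Odd e2) (he3 : e3 = -e1 - e2)
    (hv2 : 2 ∣ e3 ∧ ¬ (4 ∣ e3)) (hn : Odd n)
    (hodd1 : Odd d1) (hodd2 : Odd d2) (hodd3 : Odd d3)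
    (hsq : ∃ r : ℚ, r ≠ 0 ∧ ((d1 * d2 * d3 : ℤ) : ℚ) = r ^ 2)
    (hd1 : d1 % 4 = 1) (hd2 : d2 % 4 = 3) (hd3 : d3 % 4 = 3)
    (hH1 : HilbertVanish2 (e1 * n * d3) d1)
    (hH2 : HilbertVanish2 (e2 * n * d1) d2)
    (hH3 : HilbertVanish2 (e3 * n * d2) d3) :
    ((d1 - e2 * n) - (d2 + e1 * n)) % 8 = 0 ∧ (e2 * n) % 4 = d1 % 4 :=
  stmt8_general e1 e2 e3 n d1 d2 d3 ho2 he3 hv2 hn hodd1 hodd2 hodd3 hsq hd1 hd2 hd3 hH2 hH3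
end

section
/- Let e1, e2 be odd, e3 = −e1−e2 with 2 ∥ e3, n odd, d1, d2, d3 odd integers with (d1,d2,d3) ≡ (−1,−1,1) mod 4 and d1·d2·d3 a rational square. Then the three conditions [e1·n·d3, d1]₂ = 0, [e2·n·d1, d2]₂ = 0, and [e3·n·d2, d3]₂ = 0 cannot all hold simultaneously. -/
theorem exists_mul_norm_le_one_and_eq_one {K ι : Type*} [NormedDivisionRing K] [Finite ι]
    (v : ι → K) (hv : v ≠ 0) : ∃ c : K, (∀ i, ‖c * v i‖ ≤ 1) ∧ ∃ i, c * v i = 1 := by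
  obtain ⟨j, hj⟩ := Function.ne_iff.mp hv
  have : Nonempty ι := ⟨j⟩
  obtain ⟨i, hi⟩ := Finite.exists_max fun k => ‖v k‖
  have hvi : v i ≠ 0 := norm_pos_iff.mp ((norm_pos_iff.mpr hj).trans_le (hi j))
  refine ⟨(v i)⁻¹, fun k => ?_, i, inv_mul_cancel₀ hvi⟩
  rw [norm_mul, norm_inv]
  exact inv_mul_le_one_of_le₀ (hi k) (norm_nonneg _)

theorem HilbertVanish2.exists_padicInt {a b : ℤ} (h : HilbertVanish2 a b) :
    ∃ X Y Z : ℤ_[2], (a : ℤ_[2]) * X ^ 2 + b * Y ^ 2 = Z ^ 2 ∧ (X = 1 ∨ Y = 1 ∨ Z = 1) := by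
  obtain ⟨x, y, z, hxyz, heq⟩ := h
  have hv : ![x, y, z] ≠ 0 := fun h0 =>
    hxyz ⟨congrFun h0 0, congrFun h0 1, congrFun h0 2⟩
  obtain ⟨c, hle, i, hi⟩ := exists_mul_norm_le_one_and_eq_one _ hv
  refine ⟨⟨c * x, hle 0⟩, ⟨c * y, hle 1⟩, ⟨c * z, hle 2⟩, PadicInt.ext ?_, ?_⟩
  · change (a : ℚ_[2]) * (c * x) ^ 2 + b * (c * y) ^ 2 = (c * z) ^ 2
    linear_combination c ^ 2 * heq
  · fin_cases i
    exacts [Or.inl (PadicInt.ext hi), Or.inr (Or.inl (PadicInt.ext hi)),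
      Or.inr (Or.inr (PadicInt.ext hi))]

-- Squares in `ZMod 4` are `0` or `1`, so `3X² + 3Y² = -(X² + Y²)` is a square only if all
-- three of `X, Y, Z` are even.
theorem ZMod.three_mul_sq_add_three_mul_sq_ne_sq (X Y Z : ZMod 4) (h : X = 1 ∨ Y = 1 ∨ Z = 1) :
    3 * X ^ 2 + 3 * Y ^ 2 ≠ Z ^ 2 := by
  revert X Y Z; decide

theorem intCast_zmod_four_eq_of_emod_eq {a r : ℤ} (h : a % 4 = r) : (a : ZMod 4) = r := by
  rw [← h]; exact (ZMod.intCast_mod a 4).symm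

theorem not_hilbertVanish2_of_emod_four_eq_three {a b : ℤ} (ha : a % 4 = 3) (hb : b % 4 = 3) :
    ¬ HilbertVanish2 a b := by
  intro h
  obtain ⟨X, Y, Z, heq, hone⟩ := h.exists_padicInt
  have hmod := congrArg (PadicInt.toZModPow (p := 2) 2) heq
  simp only [map_add, map_mul, map_pow, map_intCast, intCast_zmod_four_eq_of_emod_eq ha,
    intCast_zmod_four_eq_of_emod_eq hb, Int.cast_ofNat] at hmod
  refine ZMod.three_mul_sq_add_three_mul_sq_ne_sq _ _ _ ?_ hmod
  rcases hone with rfl | rfl | rfl <;> simp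

theorem emod_four_eq_one_of_hilbertVanish2 {a b : ℤ} (ha : Odd a) (hb : b % 4 = 3)
    (h : HilbertVanish2 a b) : a % 4 = 1 := by
  have : a % 4 = 1 ∨ a % 4 = 3 := by rcases ha with ⟨k, rfl⟩; omega
  exact this.resolve_right fun h3 => not_hilbertVanish2_of_emod_four_eq_three h3 hb h

theorem four_dvd_add_of_emod_four {e1 e2 n d1 d3 : ℤ} (h1 : e1 * n * d3 % 4 = 1)
    (h2 : e2 * n * d1 % 4 = 1) (hd1 : d1 % 4 = 3) (hd3 : d3 % 4 = 1) : 4 ∣ e1 + e2 := by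
  have key : ∀ E1 E2 N : ZMod 4, E1 * N = 1 → E2 * N * 3 = 1 → E1 + E2 = 0 := by decide
  have h1' := intCast_zmod_four_eq_of_emod_eq h1
  have h2' := intCast_zmod_four_eq_of_emod_eq h2
  push_cast [intCast_zmod_four_eq_of_emod_eq hd1, intCast_zmod_four_eq_of_emod_eq hd3] at h1' h2'
  have hsum := key _ _ _ (by simpa using h1') h2'
  exact_mod_cast (ZMod.intCast_zmod_eq_zero_iff_dvd (e1 + e2) 4).mp (by push_cast; exact hsum)

theorem stmt9_general (e1 e2 e3 n d1 d2 d3 : ℤ)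
    (ho1 : Odd e1) (ho2 : Odd e2) (he3 : e3 = -e1 - e2)
    (hv2 : 2 ∣ e3 ∧ ¬ (4 ∣ e3)) (hn : Odd n)
    (hodd1 : Odd d1) (hodd3 : Odd d3)
    (hd1 : d1 % 4 = 3) (hd2 : d2 % 4 = 3) (hd3 : d3 % 4 = 1) :
    ¬ (HilbertVanish2 (e1 * n * d3) d1 ∧ HilbertVanish2 (e2 * n * d1) d2 ∧
        HilbertVanish2 (e3 * n * d2) d3) := by
  rintro ⟨h1, h2, -⟩
  have r1 := emod_four_eq_one_of_hilbertVanish2 ((ho1.mul hn).mul hodd3) hd1 h1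
  have r2 := emod_four_eq_one_of_hilbertVanish2 ((ho2.mul hn).mul hodd1) hd2 h2
  have := four_dvd_add_of_emod_four r1 r2 hd1 hd3
  omega

theorem stmt9 (e1 e2 e3 n d1 d2 d3 : ℤ)
    (ho1 : Odd e1) (ho2 : Odd e2) (he3 : e3 = -e1 - e2)
    (hv2 : 2 ∣ e3 ∧ ¬ (4 ∣ e3)) (hn : Odd n)
    (hodd1 : Odd d1) (hodd2 : Odd d2) (hodd3 : Odd d3)
    (hd1 : d1 % 4 = 3) (hd2 : d2 % 4 = 3) (hd3 : d3 % 4 = 1)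
    (hsq : ∃ r : ℚ, r ≠ 0 ∧ ((d1 * d2 * d3 : ℤ) : ℚ) = r ^ 2) :
    ¬ (HilbertVanish2 (e1 * n * d3) d1 ∧ HilbertVanish2 (e2 * n * d1) d2 ∧
        HilbertVanish2 (e3 * n * d2) d3) :=
  stmt9_general e1 e2 e3 n d1 d2 d3 ho1 ho2 he3 hv2 hn hodd1 hodd3 hd1 hd2 hd3
end

section
/- Let q be an odd prime dividing e1 exactly once (q ∥ e1), with e1+e2+e3 = 0 and q ∤ n·e2·e3·d1, and let d2, d3 be square-free integers both divisible by q. Then the system e1·n·t² + d2·u2² − d3·u3² = 0, e2·n·t² + d3·u3² − d1·u1² = 0, e3·n·t² + d1·u1² − d2·u2² = 0 has a nonzero ℚ_q-point if and only if e2·n·d1 is a square modulo q. -/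
/-!
Write `e₁ = q ε₁`, `d₂ = q δ₂`, `d₃ = q δ₃`. Since the three equations sum to zero, the system is
equivalent to `ε₁ n t² + δ₂ u₂² = δ₃ u₃²` and `e₂ n t² + q δ₃ u₃² = d₁ u₁²`, whose coefficients
are all `q`-adic units. In a primitive solution over `ℤ_q`, `q ∣ t` would force successively
`q ∣ u₁`, `q ∣ u₃`, `q ∣ u₂`; hence `t` is a unit and the second equation modulo `q` shows that
`e₂ n d₁` is a square. Conversely, every unit of `𝔽_q` is of the form `b y² + c z²` with `b, c`
units, so Hensel's lemma solves the first equation with `t = 1`, and the second one then asks for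
a square root of a `q`-adic unit congruent to `e₂ n d₁ / d₁²`.
-/

open Polynomial

theorem isSquare_mul_of_mul_sq_eq {K : Type*} [Field K] {a b x y : K} (hx : x ≠ 0)
    (h : a * x ^ 2 = b * y ^ 2) : IsSquare (a * b) :=
  ⟨b * y / x, by field_simp; linear_combination b * h⟩

theorem Prime.dvd_of_dvd_of_quadratic_system {R : Type*} [CommRing R] [IsDomain R] {p : R}
    (hp : Prime p) {ε a δ₂ δ₃ d₁ t u₁ u₂ u₃ : R} (hδ₂ : IsUnit δ₂) (hδ₃ : IsUnit δ₃)
    (hd₁ : IsUnit d₁) (h₁ : ε * t ^ 2 + δ₂ * u₂ ^ 2 = δ₃ * u₃ ^ 2)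
    (h₂ : a * t ^ 2 + p * δ₃ * u₃ ^ 2 = d₁ * u₁ ^ 2) (ht : p ∣ t) :
    p ∣ u₁ ∧ p ∣ u₂ ∧ p ∣ u₃ := by
  obtain ⟨t, rfl⟩ := ht
  obtain ⟨u₁, rfl⟩ : p ∣ u₁ := hp.dvd_of_dvd_pow (n := 2) <| hd₁.dvd_mul_left.mp
    ⟨a * p * t ^ 2 + δ₃ * u₃ ^ 2, by linear_combination -h₂⟩
  obtain ⟨u₃, rfl⟩ : p ∣ u₃ := hp.dvd_of_dvd_pow (n := 2) <| hδ₃.dvd_mul_left.mp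
    ⟨d₁ * u₁ ^ 2 - a * t ^ 2, mul_left_cancel₀ hp.ne_zero (by linear_combination h₂)⟩
  have hu₂ : p ∣ u₂ := hp.dvd_of_dvd_pow (n := 2) <| hδ₂.dvd_mul_left.mp
    ⟨p * (δ₃ * u₃ ^ 2 - ε * t ^ 2), by linear_combination h₁⟩
  exact ⟨dvd_mul_right _ _, hu₂, dvd_mul_right _ _⟩

theorem quadratic_system_iff {R : Type*} [CommRing R] [IsDomain R]
    {q ε a n δ₂ δ₃ d₁ t u₁ u₂ u₃ : R} (hq : q ≠ 0) :
    (q * ε * n * t ^ 2 + q * δ₂ * u₂ ^ 2 - q * δ₃ * u₃ ^ 2 = 0 ∧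
        a * n * t ^ 2 + q * δ₃ * u₃ ^ 2 - d₁ * u₁ ^ 2 = 0 ∧
        (-(q * ε) - a) * n * t ^ 2 + d₁ * u₁ ^ 2 - q * δ₂ * u₂ ^ 2 = 0) ↔
      ε * n * t ^ 2 + δ₂ * u₂ ^ 2 = δ₃ * u₃ ^ 2 ∧
        a * n * t ^ 2 + q * δ₃ * u₃ ^ 2 = d₁ * u₁ ^ 2 := by
  constructor
  · rintro ⟨h₁, h₂, -⟩
    exact ⟨mul_left_cancel₀ hq (by linear_combination h₁), by linear_combination h₂⟩
  · rintro ⟨h₁, h₂⟩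
    exact ⟨by linear_combination q * h₁, by linear_combination h₂,
      by linear_combination -q * h₁ - h₂⟩

namespace PadicInt

variable {p : ℕ} [Fact p.Prime]

theorem isUnit_iff_toZMod_ne_zero {x : ℤ_[p]} : IsUnit x ↔ toZMod x ≠ 0 := by
  rw [ne_eq, ← RingHom.mem_ker, ker_toZMod, IsLocalRing.mem_maximalIdeal, mem_nonunits_iff,
    not_not]

theorem toZMod_eq_zero_iff_dvd {x : ℤ_[p]} : toZMod x = 0 ↔ (p : ℤ_[p]) ∣ x := by
  rw [← RingHom.mem_ker, ker_toZMod, maximalIdeal_eq_span_p, Ideal.mem_span_singleton]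

theorem isUnit_intCast_iff {m : ℤ} : IsUnit (m : ℤ_[p]) ↔ ¬ (p : ℤ) ∣ m := by
  rw [isUnit_iff_toZMod_ne_zero, map_intCast, ne_eq, ZMod.intCast_zmod_eq_zero_iff_dvd]

theorem isSquare_of_isSquare_toZMod (hp : p ≠ 2) {x : ℤ_[p]} (hx : IsUnit x)
    (h : IsSquare (toZMod x)) : IsSquare x := by
  obtain ⟨b, hb⟩ := h
  obtain ⟨a, rfl⟩ := ZMod.ringHom_surjective toZMod b
  have ha : IsUnit a := isUnit_iff_toZMod_ne_zero.mpr fun h0 ↦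
    isUnit_iff_toZMod_ne_zero.mp hx (by rw [hb, h0, mul_zero])
  have h2 : IsUnit (2 : ℤ_[p]) := by
    have h2p : ¬ (p : ℤ) ∣ 2 := by
      exact_mod_cast (Nat.prime_dvd_prime_iff_eq Fact.out Nat.prime_two).not.mpr hp
    simpa using isUnit_intCast_iff.mpr h2p
  have hnorm : ‖(X ^ 2 - C x).eval a‖ < ‖(derivative (X ^ 2 - C x)).eval a‖ ^ 2 := by
    have hd : (derivative (X ^ 2 - C x : ℤ_[p][X])).eval a = 2 * a := by
      simp only [derivative_sub, derivative_X_pow, derivative_C, eval_sub, eval_mul, eval_C,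
        eval_pow, eval_X]
      norm_num
    rw [hd, isUnit_iff.mp (h2.mul ha), one_pow, norm_lt_one_iff_dvd, ← toZMod_eq_zero_iff_dvd]
    simp [hb, sq]
  obtain ⟨z, hz, -⟩ := hensels_lemma hnorm
  rw [coe_aeval_eq_eval, eval_sub, eval_pow, eval_X, eval_C, sub_eq_zero] at hz
  exact ⟨z, by rw [← hz, sq]⟩

theorem exists_mul_sq_eq (hp : p ≠ 2) {γ β : ℤ_[p]} (hγ : IsUnit γ) (hβ : IsUnit β)
    (h : IsSquare (toZMod γ * toZMod β)) : ∃ z, γ * z ^ 2 = β := by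
  obtain ⟨s, hs⟩ := isSquare_of_isSquare_toZMod hp (hγ.mul hβ) (by rwa [map_mul])
  obtain ⟨γ, rfl⟩ := hγ
  exact ⟨s * ↑γ⁻¹, by
    linear_combination -(↑γ * ↑γ⁻¹ ^ 2) * hs + β * (↑γ * ↑γ⁻¹ + 1) * Units.mul_inv γ⟩

theorem exists_mul_sq_add_mul_sq_eq_of_toZMod (hp : p ≠ 2) {a b c : ℤ_[p]} (hb : IsUnit b)
    {y z : ZMod p} (hy : y ≠ 0) (h : toZMod b * y ^ 2 + toZMod c * z ^ 2 = toZMod a) :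
    ∃ y z : ℤ_[p], b * y ^ 2 + c * z ^ 2 = a := by
  obtain ⟨z, rfl⟩ := ZMod.ringHom_surjective toZMod z
  have hrest : toZMod (a - c * z ^ 2) = toZMod b * y ^ 2 := by
    rw [map_sub, map_mul, map_pow, ← h, add_sub_cancel_right]
  have hunit : IsUnit (a - c * z ^ 2) := by
    rw [isUnit_iff_toZMod_ne_zero, hrest]
    exact mul_ne_zero (isUnit_iff_toZMod_ne_zero.mp hb) (pow_ne_zero 2 hy)
  obtain ⟨y, hy⟩ := exists_mul_sq_eq hp hb hunit (by rw [hrest]; exact ⟨toZMod b * y, by ring⟩)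
  exact ⟨y, z, by rw [hy, sub_add_cancel]⟩

theorem exists_mul_sq_add_mul_sq_eq (hp : p ≠ 2) {a b c : ℤ_[p]} (ha : IsUnit a) (hb : IsUnit b)
    (hc : IsUnit c) : ∃ y z : ℤ_[p], b * y ^ 2 + c * z ^ 2 = a := by
  have hodd : Fintype.card (ZMod p) % 2 = 1 := by
    rw [ZMod.card]; exact Nat.odd_iff.mp ((Fact.out : p.Prime).odd_of_ne_two hp)
  have hg : degree (C (toZMod c) * X ^ 2 - C (toZMod a)) = 2 := by
    have hc2 := degree_C_mul_X_pow 2 (isUnit_iff_toZMod_ne_zero.mp hc)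
    rw [degree_sub_C (by rw [hc2]; norm_num), hc2]
    norm_num
  obtain ⟨y, z, hyz⟩ := FiniteField.exists_root_sum_quadratic
    (degree_C_mul_X_pow 2 (isUnit_iff_toZMod_ne_zero.mp hb)) hg hodd
  simp only [eval_mul, eval_C, eval_pow, eval_X, eval_sub] at hyz
  have h : toZMod b * y ^ 2 + toZMod c * z ^ 2 = toZMod a := by linear_combination hyz
  by_cases hy : y = 0
  · have hz : z ≠ 0 := by
      rintro rfl
      apply isUnit_iff_toZMod_ne_zero.mp ha
      rw [← h, hy]; ring
    obtain ⟨z, y, hzy⟩ := exists_mul_sq_add_mul_sq_eq_of_toZMod (a := a) (c := b) (y := z) (z := y)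
      hp hc hz (by rw [← h]; ring)
    exact ⟨y, z, by rw [← hzy]; ring⟩
  · exact exists_mul_sq_add_mul_sq_eq_of_toZMod hp hb hy h

theorem exists_eq_mul_of_ne_zero {ι : Type*} [Finite ι] (v : ι → ℚ_[p]) (hv : v ≠ 0) :
    ∃ c ≠ 0, ∃ w : ι → ℤ_[p], (∀ j, v j = c * w j) ∧ ∃ i, w i = 1 := by
  obtain ⟨j, hj⟩ := Function.ne_iff.mp hv
  have : Nonempty ι := ⟨j⟩
  obtain ⟨i, hi⟩ := Finite.exists_max fun j ↦ ‖v j‖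
  have hc : v i ≠ 0 := norm_pos_iff.mp ((norm_pos_iff.mpr hj).trans_le (hi j))
  refine ⟨v i, hc, fun j ↦ ⟨v j / v i, ?_⟩, fun j ↦ ?_, i, Subtype.ext (div_self hc)⟩
  · rw [norm_div]
    exact div_le_one_of_le₀ (hi j) (norm_nonneg _)
  · exact (mul_div_cancel₀ _ hc).symm

end PadicInt

section

open PadicInt

variable {p : ℕ} [Fact p.Prime] {ε a δ₂ δ₃ d₁ : ℤ_[p]}

theorem isSquare_toZMod_of_nontrivial_solution (hδ₂ : IsUnit δ₂) (hδ₃ : IsUnit δ₃)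
    (hd₁ : IsUnit d₁) {t u₁ u₂ u₃ : ℚ_[p]} (hne : ¬(t = 0 ∧ u₁ = 0 ∧ u₂ = 0 ∧ u₃ = 0))
    (h₁ : (ε : ℚ_[p]) * t ^ 2 + δ₂ * u₂ ^ 2 = δ₃ * u₃ ^ 2)
    (h₂ : (a : ℚ_[p]) * t ^ 2 + p * δ₃ * u₃ ^ 2 = d₁ * u₁ ^ 2) :
    IsSquare (toZMod a * toZMod d₁) := by
  obtain ⟨c, hc, w, hw, i, hi⟩ := exists_eq_mul_of_ne_zero ![t, u₁, u₂, u₃] fun h ↦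
    hne ⟨congrFun h 0, congrFun h 1, congrFun h 2, congrFun h 3⟩
  obtain rfl : t = c * w 0 := hw 0
  obtain rfl : u₁ = c * w 1 := hw 1
  obtain rfl : u₂ = c * w 2 := hw 2
  obtain rfl : u₃ = c * w 3 := hw 3
  have hc2 : c ^ 2 ≠ 0 := pow_ne_zero 2 hc
  have H₁ : ε * w 0 ^ 2 + δ₂ * w 2 ^ 2 = δ₃ * w 3 ^ 2 :=
    PadicInt.ext <| by push_cast; exact mul_left_cancel₀ hc2 (by linear_combination h₁)
  have H₂ : a * w 0 ^ 2 + p * δ₃ * w 3 ^ 2 = d₁ * w 1 ^ 2 :=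
    PadicInt.ext <| by push_cast; exact mul_left_cancel₀ hc2 (by linear_combination h₂)
  by_cases hT : (p : ℤ_[p]) ∣ w 0
  · obtain ⟨h₁, h₂, h₃⟩ := prime_p.dvd_of_dvd_of_quadratic_system hδ₂ hδ₃ hd₁ H₁ H₂ hT
    have hdvd : ∀ j, (p : ℤ_[p]) ∣ w j := by
      intro j
      fin_cases j <;> assumption
    exact absurd (hi ▸ hdvd i) prime_p.not_dvd_one
  · have H₂' := congrArg toZMod H₂
    simp only [map_add, map_mul, map_pow, map_natCast, ZMod.natCast_self, zero_mul,
      add_zero] at H₂'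
    exact isSquare_mul_of_mul_sq_eq (mt toZMod_eq_zero_iff_dvd.mp hT) H₂'

theorem exists_nontrivial_solution_iff_isSquare_toZMod (hp : p ≠ 2) (hε : IsUnit ε)
    (ha : IsUnit a) (hδ₂ : IsUnit δ₂) (hδ₃ : IsUnit δ₃) (hd₁ : IsUnit d₁) :
    (∃ t u₁ u₂ u₃ : ℚ_[p], ¬(t = 0 ∧ u₁ = 0 ∧ u₂ = 0 ∧ u₃ = 0) ∧
        (ε : ℚ_[p]) * t ^ 2 + δ₂ * u₂ ^ 2 = δ₃ * u₃ ^ 2 ∧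
        (a : ℚ_[p]) * t ^ 2 + p * δ₃ * u₃ ^ 2 = d₁ * u₁ ^ 2) ↔
      IsSquare (toZMod a * toZMod d₁) := by
  refine ⟨fun ⟨t, u₁, u₂, u₃, hne, h₁, h₂⟩ ↦
    isSquare_toZMod_of_nontrivial_solution hδ₂ hδ₃ hd₁ hne h₁ h₂, fun h ↦ ?_⟩
  obtain ⟨u₂, u₃, h₁⟩ := exists_mul_sq_add_mul_sq_eq hp hε.neg hδ₂ hδ₃.neg
  have hred : toZMod (a + (p : ℤ_[p]) * δ₃ * u₃ ^ 2) = toZMod a := by simp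
  obtain ⟨u₁, h₂⟩ := exists_mul_sq_eq hp hd₁
    (isUnit_iff_toZMod_ne_zero.mpr (hred ▸ isUnit_iff_toZMod_ne_zero.mp ha))
    (by rw [hred, mul_comm]; exact h)
  have h₁' := congrArg ((↑) : ℤ_[p] → ℚ_[p]) h₁
  have h₂' := congrArg ((↑) : ℤ_[p] → ℚ_[p]) h₂
  push_cast at h₁' h₂'
  exact ⟨1, u₁, u₂, u₃, by simp, by linear_combination h₁', by linear_combination -h₂'⟩

end

theorem stmt15 (q : ℕ) [Fact q.Prime] (hq : q ≠ 2)
    (n e1 e2 e3 d1 d2 d3 : ℤ)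
    (hqe1 : (q : ℤ) ∣ e1) (hqe1' : ¬ ((q : ℤ) ^ 2 ∣ e1))
    (hs : e1 + e2 + e3 = 0)
    (hqunit : ¬ (q : ℤ) ∣ n * e2 * e3 * d1)
    (hsf2 : Squarefree d2) (hsf3 : Squarefree d3)
    (hqd2 : (q : ℤ) ∣ d2) (hqd3 : (q : ℤ) ∣ d3) :
    (∃ t u1 u2 u3 : ℚ_[q], ¬ (t = 0 ∧ u1 = 0 ∧ u2 = 0 ∧ u3 = 0) ∧
        (e1 : ℚ_[q]) * n * t ^ 2 + d2 * u2 ^ 2 - d3 * u3 ^ 2 = 0 ∧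
        (e2 : ℚ_[q]) * n * t ^ 2 + d3 * u3 ^ 2 - d1 * u1 ^ 2 = 0 ∧
        (e3 : ℚ_[q]) * n * t ^ 2 + d1 * u1 ^ 2 - d2 * u2 ^ 2 = 0)
    ↔ IsSquare ((e2 * n * d1 : ℤ) : ZMod q) := by
  have hq' : Prime (q : ℤ) := Nat.prime_iff_prime_int.mp Fact.out
  obtain ⟨ε1, rfl⟩ := hqe1
  obtain ⟨δ2, rfl⟩ := hqd2
  obtain ⟨δ3, rfl⟩ := hqd3
  obtain rfl : e3 = -(q * ε1) - e2 := by linear_combination hs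
  simp only [hq'.dvd_mul, not_or] at hqunit
  obtain ⟨⟨⟨hn, he2⟩, -⟩, hd1⟩ := hqunit
  have hε1 : ¬ (q : ℤ) ∣ ε1 := fun h ↦ hqe1' (by rw [sq]; exact mul_dvd_mul_left _ h)
  have hδ2 : ¬ (q : ℤ) ∣ δ2 := fun h ↦ hq'.not_isUnit (hsf2 _ (mul_dvd_mul_left _ h))
  have hδ3 : ¬ (q : ℤ) ∣ δ3 := fun h ↦ hq'.not_isUnit (hsf3 _ (mul_dvd_mul_left _ h))
  have hunit : ∀ m : ℤ, ¬ (q : ℤ) ∣ m → IsUnit (m : ℤ_[q]) :=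
    fun _ ↦ PadicInt.isUnit_intCast_iff.mpr
  have key := exists_nontrivial_solution_iff_isSquare_toZMod hq
    (ε := ((ε1 * n : ℤ) : ℤ_[q])) (a := ((e2 * n : ℤ) : ℤ_[q]))
    (hunit _ (hq'.dvd_mul.not.mpr (not_or.mpr ⟨hε1, hn⟩)))
    (hunit _ (hq'.dvd_mul.not.mpr (not_or.mpr ⟨he2, hn⟩))) (hunit _ hδ2) (hunit _ hδ3) (hunit _ hd1)
  rw [map_intCast, map_intCast, ← Int.cast_mul] at key
  rw [← key]
  have hq0 : (q : ℚ_[q]) ≠ 0 := Nat.cast_ne_zero.mpr (Fact.out : q.Prime).ne_zero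
  refine exists_congr fun t ↦ exists_congr fun u₁ ↦ exists_congr fun u₂ ↦ exists_congr fun u₃ ↦
    and_congr_right fun _ ↦ ?_
  push_cast
  exact quadratic_system_iff hq0
end

section
/- Let q be an odd prime, and suppose λ is an integer such that q ∣ λ, where λ, α, β satisfy λa = e1α² + 2e2αβ − e2β², λb = e1α² − 2e1αβ − e2β², λc = e1α² + e2β² with gcd(α, β) = 1 and e1 + e2 + e3 = 0. If q ∤ e1·e2·e3 then we get a contradiction; that is, every odd prime divisor of λ divides e1·e2·e3. -/
theorem stmt19 (q : ℕ) (hq : q.Prime) (hq2 : q ≠ 2)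
    (e1 e2 e3 lam α β a b c : ℤ)
    (he1 : e1 ≠ 0) (he2 : e2 ≠ 0) (he3 : e3 ≠ 0)
    (hs : e1 + e2 + e3 = 0)
    (hcop : IsCoprime α β)
    (ha : lam * a = e1 * α ^ 2 + 2 * e2 * α * β - e2 * β ^ 2)
    (hb : lam * b = e1 * α ^ 2 - 2 * e1 * α * β - e2 * β ^ 2)
    (hc : lam * c = e1 * α ^ 2 + e2 * β ^ 2)
    (hql : (q : ℤ) ∣ lam) :
    (q : ℤ) ∣ e1 * e2 * e3 := by
  by_contra h
  have hp : Prime (q : ℤ) := Nat.prime_iff_prime_int.mp hq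
  have hne1 : ¬ (q : ℤ) ∣ e1 := fun hd => h ((hd.mul_right e2).mul_right e3)
  have hne2 : ¬ (q : ℤ) ∣ e2 := fun hd => h ((hd.mul_left e1).mul_right e3)
  have hne3 : ¬ (q : ℤ) ∣ e3 := fun hd => h (hd.mul_left (e1 * e2))
  have h1 : (q : ℤ) ∣ e1 * α ^ 2 + e2 * β ^ 2 := hc ▸ hql.mul_right c
  have h2 : (q : ℤ) ∣ 2 * e3 * (α * β) := by
    have hd := hql.mul_right (a - b)
    have hx : lam * (a - b) = -(2 * e3 * (α * β)) := by
      rw [mul_sub, ha, hb]; linear_combination (2 * α * β) * hs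
    rw [hx, dvd_neg] at hd
    exact hd
  have hq2' : ¬ (q : ℤ) ∣ 2 := by
    intro hd
    have hd' : q ∣ 2 := by exact_mod_cast hd
    exact hq2 ((Nat.prime_dvd_prime_iff_eq hq Nat.prime_two).mp hd')
  have hab : (q : ℤ) ∣ α * β := by
    rcases hp.dvd_mul.mp h2 with h' | h'
    · rcases hp.dvd_mul.mp h' with h'' | h''
      · exact absurd h'' hq2'
      · exact absurd h'' hne3
    · exact h'
  have hunit : ¬ IsUnit ((q : ℤ)) := hp.not_unit
  rcases hp.dvd_mul.mp hab with hα | hβ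
  · have : (q : ℤ) ∣ e2 * β ^ 2 := by
      have := dvd_sub h1 ((hα.mul_left e1).mul_right α)
      have heq : e1 * α ^ 2 + e2 * β ^ 2 - e1 * α * α = e2 * β ^ 2 := by ring
      rwa [heq] at this
    rcases hp.dvd_mul.mp this with h' | h'
    · exact hne2 h'
    · exact hunit (hcop.isUnit_of_dvd' hα (hp.dvd_of_dvd_pow h'))
  · have : (q : ℤ) ∣ e1 * α ^ 2 := by
      have := dvd_sub h1 ((hβ.mul_left e2).mul_right β)
      have heq : e1 * α ^ 2 + e2 * β ^ 2 - e2 * β * β = e1 * α ^ 2 := by ring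
      rwa [heq] at this
    rcases hp.dvd_mul.mp this with h' | h'
    · exact hne1 h'
    · exact hunit (hcop.isUnit_of_dvd' (hp.dvd_of_dvd_pow h') hβ)
end
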